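/- For x ≥ 1, |Γ(x) - (2π/x)^(1/2) (x/e)^x| ≤ (1/(9x)) (2π/x)^(1/2) (x/e)^x; consequently 0.9 (2π/x)^(1/2)(x/e)^x ≤ Γ(x) ≤ 1.1 (2π/x)^(1/2)(x/e)^x. -/

import Mathlib

open Real Filter Topology Finset

namespace GSB

/-- The log of the Stirling approximant. -/
noncomputable def g (x : ℝ) : ℝ := (x - 1/2) * Real.log x - x + Real.log (2 * π) / 2

/-- Binet error. -/
noncomputable def hh (x : ℝ) : ℝ := Real.log (Real.Gamma x) - g x

/-- successive difference -/
noncomputable def d (x : ℝ) : ℝ := (x + 1/2) * Real.log (1 + 1/x) - 1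

lemma d_hasSum {x : ℝ} (hx : 0 < x) :
    HasSum (fun k : ℕ => (1 : ℝ) / (2 * (k:ℝ) + 3) * ((1 / (2 * x + 1)) ^ 2) ^ (k+1)) (d x) := by
  have h := (Real.hasSum_log_one_add_inv hx).mul_left (x + 1/2)
  have h2x : (2*x+1) ≠ 0 := by positivity
  have heq : (fun k : ℕ => (x + 1/2) * ((2 : ℝ) * (1 / (2 * (k:ℝ) + 1)) * (1 / (2 * x + 1)) ^ (2 * k + 1)))
      = fun k : ℕ => (1 : ℝ) / (2 * (k:ℝ) + 1) * ((1 / (2 * x + 1)) ^ 2) ^ k := by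
    ext k
    rw [← pow_mul]
    have hk : (2 * (k:ℝ) + 1) ≠ 0 := by positivity
    rw [pow_succ]
    field_simp
  rw [heq] at h
  have h' := (hasSum_nat_add_iff' (f := fun k : ℕ => (1 : ℝ) / (2 * (k:ℝ) + 1) * ((1 / (2 * x + 1)) ^ 2) ^ k) 1).2 h
  have e1 : (fun n : ℕ => (1:ℝ)/(2*(n:ℝ)+3) * ((1/(2*x+1))^2)^(n+1))
      = fun n : ℕ => (1:ℝ)/(2*((n:ℕ)+1:ℕ)+1) * ((1/(2*x+1))^2)^(n+1) := by
    funext n; push_cast; ring_nf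
  have hd : d x = (x + 1/2) * Real.log (1 + x⁻¹) - 1 := by rw [d, one_div x]
  rw [hd, e1]
  convert h' using 1
  norm_num
  · rfl
  · simp

lemma d_nonneg {x : ℝ} (hx : 0 < x) : 0 ≤ d x :=
  (d_hasSum hx).nonneg fun k => by positivity

lemma d_le {x : ℝ} (hx : 0 < x) : d x ≤ 1/(12*x) - 1/(12*(x+1)) := by
  set u : ℝ := (1 / (2 * x + 1)) ^ 2 with hu
  have hu0 : 0 ≤ u := sq_nonneg _
  have hu1 : u < 1 := by
    rw [hu, one_div, inv_pow]
    exact inv_lt_one_of_one_lt₀ (one_lt_pow₀ (by linarith) two_ne_zero)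
  have base := (hasSum_geometric_of_lt_one hu0 hu1).mul_left ((1/3 : ℝ) * u)
  have hgeo : HasSum (fun k : ℕ => (1/3 : ℝ) * u ^ (k+1)) ((1/3) * u * (1-u)⁻¹) := by
    have e : (fun k : ℕ => (1/3:ℝ) * u ^ (k+1)) = fun k : ℕ => ((1/3:ℝ)*u) * u^k := by
      funext k; rw [pow_succ]; ring
    rw [e]; exact base
  have hle : d x ≤ (1/3) * u * (1-u)⁻¹ := by
    refine hasSum_le (fun k => ?_) (d_hasSum hx) hgeo
    have h3 : (1:ℝ) / (2 * (k:ℝ) + 3) ≤ 1/3 :=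
      one_div_le_one_div_of_le (by norm_num) (by have := Nat.cast_nonneg (α := ℝ) k; linarith)
    exact mul_le_mul_of_nonneg_right h3 (pow_nonneg hu0 _)
  refine hle.trans (le_of_eq ?_)
  rw [hu]
  have h1 : (2*x+1) ≠ 0 := by positivity
  have h2 : (1:ℝ) - (1 / (2 * x + 1)) ^ 2 = (4*x*(x+1)) / (2*x+1)^2 := by field_simp; ring
  rw [h2]
  field_simp
  ring

lemma hh_rec {x : ℝ} (hx : 0 < x) : hh x = d x + hh (x + 1) := by
  have hG : Real.Gamma (x+1) = x * Real.Gamma x := Real.Gamma_add_one hx.ne'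
  have hGpos : 0 < Real.Gamma x := Real.Gamma_pos_of_pos hx
  have hlog : Real.log (Real.Gamma (x+1)) = Real.log x + Real.log (Real.Gamma x) := by
    rw [hG, Real.log_mul hx.ne' hGpos.ne']
  have h1 : Real.log (1 + 1/x) = Real.log (x+1) - Real.log x := by
    rw [show (1:ℝ) + 1/x = (x+1)/x by field_simp, Real.log_div (by positivity) hx.ne']
  simp only [hh, g, d, hlog, h1]
  ring

lemma hh_telescope {x : ℝ} (hx : 0 < x) (m : ℕ) :
    hh x = (∑ k ∈ Finset.range m, d (x + k)) + hh (x + m) := by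
  induction m with
  | zero => simp
  | succ n ih =>
    rw [Finset.sum_range_succ, ih, hh_rec (x := x + n) (by positivity)]
    push_cast
    ring_nf


lemma sum_d_le {x : ℝ} (hx : 0 < x) (m : ℕ) :
    ∑ k ∈ Finset.range m, d (x + k) ≤ 1/(12*x) := by
  have h1 : ∑ k ∈ Finset.range m, d (x + k)
      ≤ ∑ k ∈ Finset.range m, ((1:ℝ)/(12*(x+k)) - 1/(12*(x+(k+1)))) := by
    refine Finset.sum_le_sum fun k _ => ?_
    have := d_le (x := x + k) (by positivity)
    exact this.trans_eq (by ring)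
  have h2 : ∑ k ∈ Finset.range m, ((1:ℝ)/(12*(x+k)) - 1/(12*(x+(k+1)))) = 1/(12*x) - 1/(12*(x+m)) := by
    have := Finset.sum_range_sub' (f := fun k : ℕ => (1:ℝ)/(12*(x+k))) m
    push_cast at this ⊢
    simpa using this
  have h3 : (0:ℝ) ≤ 1/(12*(x+m)) := by positivity
  calc ∑ k ∈ Finset.range m, d (x + k) ≤ _ := h1
    _ = 1/(12*x) - 1/(12*(x+m)) := h2
    _ ≤ 1/(12*x) := by linarith

lemma hh_nat (n : ℕ) (hn : 1 ≤ n) :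
    hh ((n:ℝ) + 1) = Real.log (Stirling.stirlingSeq n) - Real.log (Real.sqrt π) - d n := by
  have hn0 : (0:ℝ) < n := by exact_mod_cast hn
  have hΓ : Real.Gamma ((n:ℝ)+1) = (Nat.factorial n : ℝ) := by
    exact_mod_cast Real.Gamma_nat_eq_factorial n
  have hs := Stirling.log_stirlingSeq_formula n
  have hlogsqrtpi : Real.log (Real.sqrt π) = Real.log π / 2 := Real.log_sqrt pi_pos.le
  have h2n : Real.log (2*(n:ℝ)) = Real.log 2 + Real.log n := Real.log_mul two_ne_zero hn0.ne'
  have h2pi : Real.log (2*π) = Real.log 2 + Real.log π := Real.log_mul two_ne_zero pi_pos.ne'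
  have hne : Real.log ((n:ℝ)/Real.exp 1) = Real.log n - 1 := by
    rw [Real.log_div hn0.ne' (Real.exp_pos 1).ne', Real.log_exp]
  have hd : d n = ((n:ℝ)+1/2) * (Real.log ((n:ℝ)+1) - Real.log n) - 1 := by
    rw [d, show (1:ℝ) + 1/(n:ℝ) = ((n:ℝ)+1)/n by field_simp, Real.log_div (by positivity) hn0.ne']
  rw [hh, g, hΓ, hs, hd, h2n, h2pi, hne, hlogsqrtpi]
  ring

lemma hh_nat_tendsto : Tendsto (fun n : ℕ => hh n) atTop (𝓝 0) := by
  have h1 : Tendsto (fun n : ℕ => Real.log (Stirling.stirlingSeq n) - Real.log (Real.sqrt π))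
      atTop (𝓝 0) := by
    have hst := Stirling.tendsto_stirlingSeq_sqrt_pi
    have hc : ContinuousAt Real.log (Real.sqrt π) :=
      Real.continuousAt_log (by positivity)
    have := (hc.tendsto.comp hst).sub (tendsto_const_nhds (x := Real.log (Real.sqrt π)))
    simpa using this
  have h2 : Tendsto (fun n : ℕ => d n) atTop (𝓝 0) := by
    refine squeeze_zero' ?_ ?_ tendsto_one_div_atTop_nhds_zero_nat
    · filter_upwards [eventually_ge_atTop 1] with n hn
      exact d_nonneg (by exact_mod_cast hn)
    · filter_upwards [eventually_ge_atTop 1] with n hn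
      have hn0 : (1:ℝ) ≤ n := by exact_mod_cast hn
      have := d_le (x := (n:ℝ)) (by linarith)
      have h3 : (0:ℝ) < 12*((n:ℝ)+1) := by linarith
      have h4 : (1:ℝ)/(12*(n:ℝ)) ≤ 1/(n:ℝ) :=
        one_div_le_one_div_of_le (by linarith) (by linarith)
      have h5 : (0:ℝ) ≤ 1/(12*((n:ℝ)+1)) := by positivity
      linarith
  have h3 : Tendsto (fun n : ℕ => hh ((n:ℝ) + 1)) atTop (𝓝 0) := by
    have := (h1.sub h2)
    rw [sub_zero] at this
    refine Tendsto.congr' ?_ this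
    filter_upwards [eventually_ge_atTop 1] with n hn
    exact (hh_nat n hn).symm
  have h4 : Tendsto (fun n : ℕ => hh ((n+1 : ℕ) : ℝ)) atTop (𝓝 0) := by
    refine h3.congr fun n => ?_
    push_cast; ring_nf
  exact (tendsto_add_atTop_iff_nat (f := fun n : ℕ => hh n) 1).1 h4

lemma lim_aux0 (b c : ℝ) :
    Tendsto (fun n : ℕ => Real.log (1 + b/((n:ℝ)+c))) atTop (𝓝 0) := by
  have hnc : Tendsto (fun n : ℕ => (n:ℝ)+c) atTop atTop :=
    tendsto_atTop_add_const_right _ c tendsto_natCast_atTop_atTop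
  have hb : Tendsto (fun n : ℕ => 1 + b/((n:ℝ)+c)) atTop (𝓝 1) := by
    have h0 : Tendsto (fun n : ℕ => b/((n:ℝ)+c)) atTop (𝓝 0) :=
      Tendsto.div_atTop tendsto_const_nhds hnc
    simpa using (tendsto_const_nhds (x := (1:ℝ))).add h0
  have := (Real.continuousAt_log one_ne_zero).tendsto.comp hb
  rw [Real.log_one] at this
  exact this

lemma lim_aux (a b c : ℝ) :
    Tendsto (fun n : ℕ => ((n:ℝ)+a) * Real.log (1 + b/((n:ℝ)+c))) atTop (𝓝 b) := by
  have hnc : Tendsto (fun n : ℕ => (n:ℝ)+c) atTop atTop :=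
    tendsto_atTop_add_const_right _ c tendsto_natCast_atTop_atTop
  have h1 : Tendsto (fun n : ℕ => ((n:ℝ)+c) * Real.log (1 + b/((n:ℝ)+c))) atTop (𝓝 b) :=
    (Real.tendsto_mul_log_one_add_div_atTop b).comp hnc
  have h2 := (lim_aux0 b c).const_mul (a - c)
  have key : (fun n : ℕ => ((n:ℝ)+a) * Real.log (1 + b/((n:ℝ)+c)))
      = fun n : ℕ => ((n:ℝ)+c) * Real.log (1 + b/((n:ℝ)+c))
        + (a-c) * Real.log (1 + b/((n:ℝ)+c)) := by
    funext n; ring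
  rw [key]
  simpa using h1.add h2


lemma hh_tendsto_shift (t : ℝ) (ht0 : 0 ≤ t) (ht1 : t < 1) :
    Tendsto (fun n : ℕ => hh ((n:ℝ) + t)) atTop (𝓝 0) := by
  set A : ℕ → ℝ := fun n => (1-t)*((n:ℝ)-1/2)*Real.log n + t*((n:ℝ)+1/2)*Real.log ((n:ℝ)+1)
    - ((n:ℝ)+t-1/2)*Real.log ((n:ℝ)+t) with hA_def
  set B : ℕ → ℝ := fun n => ((n:ℝ)+t-1/2)*Real.log ((n:ℝ)+t) - ((n:ℝ)-1/2)*Real.log n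
    - t - t*Real.log ((n:ℝ)-1) with hB_def
  have hA : Tendsto A atTop (𝓝 0) := by
    have l1 : Tendsto (fun n : ℕ => ((n:ℝ)-1/2) * Real.log (1 + t/(n:ℝ))) atTop (𝓝 t) := by
      refine (lim_aux (-(1/2)) t 0).congr fun n => by rw [add_zero]; ring
    have l2 := lim_aux (1/2) (1-t) t
    have e : ∀ᶠ n : ℕ in atTop, -((1-t) * (((n:ℝ)-1/2) * Real.log (1 + t/(n:ℝ))))
        + t * (((n:ℝ)+1/2) * Real.log (1 + (1-t)/((n:ℝ)+t))) = A n := by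
      filter_upwards [eventually_ge_atTop 1] with n hn
      have hn0 : (0:ℝ) < n := by exact_mod_cast hn
      have e1 : Real.log (1 + t/(n:ℝ)) = Real.log ((n:ℝ)+t) - Real.log n := by
        rw [show (1:ℝ) + t/(n:ℝ) = ((n:ℝ)+t)/n by field_simp,
          Real.log_div (by positivity) hn0.ne']
      have e2 : Real.log (1 + (1-t)/((n:ℝ)+t)) = Real.log ((n:ℝ)+1) - Real.log ((n:ℝ)+t) := by
        rw [show (1:ℝ) + (1-t)/((n:ℝ)+t) = ((n:ℝ)+1)/((n:ℝ)+t) by field_simp; ring,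
          Real.log_div (by positivity) (by positivity)]
      simp only [hA_def, e1, e2]
      ring
    have lim := (l1.const_mul (1-t)).neg.add (l2.const_mul t)
    rw [show -((1-t)*t) + t*(1-t) = 0 by ring] at lim
    exact lim.congr' e
  have hB : Tendsto B atTop (𝓝 0) := by
    have l1 : Tendsto (fun n : ℕ => ((n:ℝ)-1/2) * Real.log (1 + t/(n:ℝ))) atTop (𝓝 t) := by
      refine (lim_aux (-(1/2)) t 0).congr fun n => by rw [add_zero]; ring
    have l2 : Tendsto (fun n : ℕ => Real.log (1 + (1+t)/((n:ℝ)-1))) atTop (𝓝 0) := by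
      refine (lim_aux0 (1+t) (-1)).congr fun n => by
        rw [show (n:ℝ) + (-1) = (n:ℝ) - 1 by ring]
    have e : ∀ᶠ n : ℕ in atTop, (((n:ℝ)-1/2) * Real.log (1 + t/(n:ℝ)))
        + t * Real.log (1 + (1+t)/((n:ℝ)-1)) - t = B n := by
      filter_upwards [eventually_ge_atTop 2] with n hn
      have hn0 : (2:ℝ) ≤ n := by exact_mod_cast hn
      have hne1 : (n:ℝ) ≠ 0 := by positivity
      have hne2 : (n:ℝ) - 1 ≠ 0 := by
        have : (0:ℝ) < (n:ℝ) - 1 := by linarith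
        exact this.ne'
      have hne3 : (n:ℝ) + t ≠ 0 := by positivity
      have e1 : Real.log (1 + t/(n:ℝ)) = Real.log ((n:ℝ)+t) - Real.log n := by
        rw [show (1:ℝ) + t/(n:ℝ) = ((n:ℝ)+t)/n by field_simp,
          Real.log_div hne3 hne1]
      have e2 : Real.log (1 + (1+t)/((n:ℝ)-1)) = Real.log ((n:ℝ)+t) - Real.log ((n:ℝ)-1) := by
        rw [show (1:ℝ) + (1+t)/((n:ℝ)-1) = ((n:ℝ)+t)/((n:ℝ)-1) by field_simp; ring,
          Real.log_div hne3 hne2]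
      simp only [hB_def, e1, e2]
      ring
    have lim := (l1.add (l2.const_mul t)).sub (tendsto_const_nhds (x := t))
    rw [show t + t*0 - t = 0 by ring] at lim
    exact lim.congr' e
  have hupper : ∀ᶠ n : ℕ in atTop, hh ((n:ℝ) + t) ≤ (1-t)*hh n + t*hh ((n:ℝ)+1) + A n := by
    filter_upwards [eventually_ge_atTop 2] with n hn
    have hn0 : (2:ℝ) ≤ n := by exact_mod_cast hn
    have hmem1 : (n:ℝ) ∈ Set.Ioi (0:ℝ) := by simp; linarith
    have hmem2 : (n:ℝ)+1 ∈ Set.Ioi (0:ℝ) := by simp; linarith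
    have hconv := Real.convexOn_log_Gamma.2 hmem1 hmem2 (by linarith : (0:ℝ) ≤ 1-t) ht0
      (by ring : (1-t) + t = 1)
    simp only [smul_eq_mul, Function.comp_apply] at hconv
    rw [show (1-t)*(n:ℝ) + t*((n:ℝ)+1) = (n:ℝ)+t by ring] at hconv
    have hg : (1-t) * g n + t * g ((n:ℝ)+1) - g ((n:ℝ)+t) = A n := by
      simp only [g, hA_def]; ring
    simp only [hh]
    linarith [hconv]
  have hlower : ∀ᶠ n : ℕ in atTop, hh n - B n ≤ hh ((n:ℝ) + t) := by
    filter_upwards [eventually_ge_atTop 2] with n hn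
    have hn0 : (2:ℝ) ≤ n := by exact_mod_cast hn
    have hmem1 : (n:ℝ)-1 ∈ Set.Ioi (0:ℝ) := by simp; linarith
    have hmem2 : (n:ℝ)+t ∈ Set.Ioi (0:ℝ) := by simp; linarith
    have ht1' : (0:ℝ) < 1 + t := by linarith
    have hconv := Real.convexOn_log_Gamma.2 hmem1 hmem2
      (by positivity : (0:ℝ) ≤ t/(1+t)) (by positivity : (0:ℝ) ≤ 1/(1+t))
      (by field_simp; ring : t/(1+t) + 1/(1+t) = 1)
    simp only [smul_eq_mul, Function.comp_apply] at hconv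
    rw [show t/(1+t)*((n:ℝ)-1) + 1/(1+t)*((n:ℝ)+t) = (n:ℝ) by field_simp; ring] at hconv
    -- log Γ n = log (n-1) + log Γ (n-1)
    have hG : Real.Gamma ((n:ℝ)) = ((n:ℝ)-1) * Real.Gamma ((n:ℝ)-1) := by
      have := Real.Gamma_add_one (s := (n:ℝ)-1) (by linarith : (n:ℝ)-1 ≠ 0)
      rw [show (n:ℝ)-1+1 = (n:ℝ) by ring] at this
      exact this
    have hGpos : 0 < Real.Gamma ((n:ℝ)-1) := Real.Gamma_pos_of_pos (by linarith)
    have hlogG : Real.log (Real.Gamma (n:ℝ)) = Real.log ((n:ℝ)-1) + Real.log (Real.Gamma ((n:ℝ)-1)) := by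
      rw [hG, Real.log_mul (by linarith) hGpos.ne']
    -- from hconv : logΓ n ≤ t/(1+t) logΓ(n-1) + 1/(1+t) logΓ(n+t)
    -- multiply by (1+t): (1+t) logΓ n ≤ t logΓ(n-1) + logΓ(n+t)
    have key : Real.log (Real.Gamma ((n:ℝ))) + t * Real.log ((n:ℝ)-1)
        ≤ Real.log (Real.Gamma ((n:ℝ)+t)) := by
      have h' := mul_le_mul_of_nonneg_left hconv ht1'.le
      rw [mul_add] at h'
      have e1 : (1+t) * (t/(1+t) * Real.log (Real.Gamma ((n:ℝ)-1))) = t * Real.log (Real.Gamma ((n:ℝ)-1)) := by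
        field_simp
      have e2 : (1+t) * (1/(1+t) * Real.log (Real.Gamma ((n:ℝ)+t))) = Real.log (Real.Gamma ((n:ℝ)+t)) := by
        field_simp
      rw [e1, e2] at h'
      have := hlogG
      nlinarith [h']
    have hg : g ((n:ℝ)+t) - g (n:ℝ) - t*Real.log ((n:ℝ)-1) = B n := by
      simp only [g, hB_def]; ring
    simp only [hh]
    linarith [key]
  have hup : Tendsto (fun n : ℕ => (1-t)*hh n + t*hh ((n:ℝ)+1) + A n) atTop (𝓝 0) := by
    have h1 : Tendsto (fun n : ℕ => hh ((n:ℝ)+1)) atTop (𝓝 0) := by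
      have := hh_nat_tendsto.comp (tendsto_add_atTop_nat 1)
      refine this.congr fun n => ?_
      simp only [Function.comp_apply]
      push_cast; ring_nf
    have := ((hh_nat_tendsto.const_mul (1-t)).add (h1.const_mul t)).add hA
    simpa using this
  have hlo : Tendsto (fun n : ℕ => hh n - B n) atTop (𝓝 0) := by
    have := hh_nat_tendsto.sub hB
    simpa using this
  exact tendsto_of_tendsto_of_tendsto_of_le_of_le' hlo hup hlower hupper

lemma hh_tendsto (x : ℝ) (hx : 1 ≤ x) : Tendsto (fun m : ℕ => hh (x + m)) atTop (𝓝 0) := by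
  have hfl : (0:ℤ) ≤ ⌊x⌋ := by
    exact_mod_cast Int.le_floor.2 (by exact_mod_cast (by linarith : (0:ℝ) ≤ x))
  set N : ℕ := ⌊x⌋.toNat with hN
  have hNx : (N:ℝ) = (⌊x⌋ : ℝ) := by
    rw [hN]; exact_mod_cast Int.toNat_of_nonneg hfl
  set t : ℝ := Int.fract x with ht
  have hxNt : x = (N:ℝ) + t := by
    rw [hNx, ht, Int.fract]; ring
  have := (hh_tendsto_shift t (Int.fract_nonneg x) (Int.fract_lt_one x)).comp
    (tendsto_add_atTop_nat N)
  refine this.congr fun m => ?_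
  simp only [Function.comp_apply]
  rw [hxNt]
  push_cast
  ring_nf

lemma hh_bounds {x : ℝ} (hx : 1 ≤ x) : 0 ≤ hh x ∧ hh x ≤ 1/(12*x) := by
  have hx0 : (0:ℝ) < x := by linarith
  have ht := hh_tendsto x hx
  constructor
  · refine le_of_tendsto ht (Eventually.of_forall fun m => ?_)
    rw [hh_telescope hx0 m]
    have : 0 ≤ ∑ k ∈ Finset.range m, d (x + k) :=
      Finset.sum_nonneg fun k _ => d_nonneg (by positivity)
    linarith
  · have ht' : Tendsto (fun m : ℕ => 1/(12*x) + hh (x + m)) atTop (𝓝 (1/(12*x))) := by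
      simpa using (tendsto_const_nhds (x := 1/(12*x))).add ht
    refine ge_of_tendsto ht' (Eventually.of_forall fun m => ?_)
    rw [hh_telescope hx0 m]
    have := sum_d_le hx0 m
    linarith

end GSB



/-- Stirling-type bound: for `x ≥ 1`,
`|Γ(x) - √(2π/x) (x/e)^x| ≤ (1/(9x)) √(2π/x) (x/e)^x`, and consequently
`0.9 √(2π/x) (x/e)^x ≤ Γ(x) ≤ 1.1 √(2π/x) (x/e)^x`. -/
theorem gamma_stirling_bound (x : ℝ) (hx : 1 ≤ x) :
    |Real.Gamma x - Real.sqrt (2 * Real.pi / x) * (x / Real.exp 1) ^ x|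
        ≤ 1 / (9 * x) * (Real.sqrt (2 * Real.pi / x) * (x / Real.exp 1) ^ x) ∧
    0.9 * (Real.sqrt (2 * Real.pi / x) * (x / Real.exp 1) ^ x) ≤ Real.Gamma x ∧
    Real.Gamma x ≤ 1.1 * (Real.sqrt (2 * Real.pi / x) * (x / Real.exp 1) ^ x) := by
  have hx0 : (0:ℝ) < x := by linarith
  have hpi := Real.pi_pos
  set S : ℝ := Real.sqrt (2 * Real.pi / x) * (x / Real.exp 1) ^ x with hSdef
  have hrpos : (0:ℝ) < (x / Real.exp 1) ^ x := Real.rpow_pos_of_pos (by positivity) x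
  have hSpos : 0 < S := by
    have : 0 < Real.sqrt (2 * Real.pi / x) := Real.sqrt_pos.2 (by positivity)
    exact mul_pos this hrpos
  have hlogS : Real.log S = GSB.g x := by
    rw [hSdef, Real.log_mul (Real.sqrt_pos.2 (by positivity)).ne' hrpos.ne',
      Real.log_sqrt (by positivity), Real.log_rpow (by positivity),
      Real.log_div (by positivity) (Real.exp_pos 1).ne', Real.log_exp,
      Real.log_div (by positivity) hx0.ne']
    simp only [GSB.g]
    ring
  have hΓpos : 0 < Real.Gamma x := Real.Gamma_pos_of_pos hx0
  have hΓ : Real.Gamma x = Real.exp (GSB.hh x) * S := by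
    have h1 : Real.log (Real.Gamma x) = GSB.hh x + Real.log S := by
      rw [hlogS]; simp [GSB.hh]
    calc Real.Gamma x = Real.exp (Real.log (Real.Gamma x)) := (Real.exp_log hΓpos).symm
      _ = Real.exp (GSB.hh x) * Real.exp (Real.log S) := by rw [h1, Real.exp_add]
      _ = Real.exp (GSB.hh x) * S := by rw [Real.exp_log hSpos]
  obtain ⟨hh0, hh12⟩ := GSB.hh_bounds hx
  set E : ℝ := Real.exp (GSB.hh x) with hEdef
  have hE1 : 1 ≤ E := Real.one_le_exp hh0
  set u : ℝ := 1/(12*x) with hu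
  have hu0 : 0 < u := by positivity
  have hu12 : u ≤ 1/12 := by
    rw [hu]
    apply one_div_le_one_div_of_le (by norm_num)
    linarith
  have hEu : E ≤ Real.exp u := Real.exp_le_exp.2 hh12
  have hexpu : Real.exp u ≤ 1/(1-u) := by
    have h1 : 1 - u ≤ Real.exp (-u) := by
      have := Real.add_one_le_exp (-u); linarith
    have h2 : (0:ℝ) < 1 - u := by linarith
    rw [Real.exp_neg] at h1
    have h3 : (0:ℝ) < Real.exp u := Real.exp_pos u
    rw [le_div_iff₀ h2]
    have h4 : Real.exp u * (1 - u) ≤ Real.exp u * (Real.exp u)⁻¹ :=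
      mul_le_mul_of_nonneg_left h1 h3.le
    rw [mul_inv_cancel₀ h3.ne'] at h4
    linarith
  have hE_le : E ≤ 1 + 1/(9*x) := by
    have h19 : (1:ℝ)/(9*x) = (4/3) * u := by rw [hu]; field_simp; ring
    have h2 : (0:ℝ) < 1 - u := by linarith
    have : 1/(1-u) ≤ 1 + (4/3)*u := by
      rw [div_le_iff₀ h2]
      nlinarith
    rw [h19]
    linarith [hEu.trans hexpu]
  have hE_le2 : E ≤ 1.1 := by
    have h2 : (0:ℝ) < 1 - u := by linarith
    have : 1/(1-u) ≤ 1.1 := by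
      rw [div_le_iff₀ h2]
      nlinarith
    linarith [hEu.trans hexpu]
  have hΓ_ge : S ≤ Real.Gamma x := by
    rw [hΓ]
    nlinarith
  have hΓ_le9 : Real.Gamma x - S ≤ 1/(9*x) * S := by
    rw [hΓ]
    have : (E - 1) * S ≤ (1/(9*x)) * S :=
      mul_le_mul_of_nonneg_right (by linarith) hSpos.le
    nlinarith [this]
  refine ⟨?_, ?_, ?_⟩
  · rw [abs_of_nonneg (by linarith)]
    exact hΓ_le9
  · norm_num
    nlinarith
  · rw [hΓ]
    norm_num
    nlinarith
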